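/- arXiv:2412.09075 — 4 statements merged into one kernel-verified Lean document; each statement's English description precedes it below -/
import Mathlib

section
/- Let μ be a probability measure on ℝⁿ with density ρ, and for s > 0 let ρ_s be the density of μ ∗ γ_s where γ_s is the centered Gaussian with covariance s·Id. Then the Hessian of log ρ_s satisfies -s⁻¹·Id ≤ ∇² log ρ_s(x) for every x ∈ ℝⁿ; that is, the function x ↦ log ρ_s(x) + |x|²/(2s) is convex. -/
/-!
Expanding the square, `ρ_s(x) · exp (‖x‖² / 2s)` is a constant times
`∫ exp (s⁻¹ (⟪y, x⟫ - ‖y‖² / 2)) dμ(y)`. The exponent is affine in `x`, and Hölder's inequality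
with exponents `1/a`, `1/b` shows that `x ↦ log ∫ exp (f x ω) dμ(ω)` is convex whenever every
`f · ω` is.
-/

open Real Set MeasureTheory

section Holder

variable {Ω : Type*} [MeasurableSpace Ω] {μ : Measure Ω} {f g : Ω → ℝ} {a b : ℝ}

theorem MeasureTheory.Integrable.rpow_mul_rpow (hf : Integrable f μ) (hg : Integrable g μ)
    (hf0 : 0 ≤ f) (hg0 : 0 ≤ g) (ha : 0 ≤ a) (hb : 0 ≤ b) (hab : a + b = 1) :
    Integrable (fun ω => f ω ^ a * g ω ^ b) μ := by
  refine ((hf.const_mul a).add (hg.const_mul b)).mono'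
    ((hf.aemeasurable.pow_const a).mul (hg.aemeasurable.pow_const b)).aestronglyMeasurable
    (ae_of_all _ fun ω => ?_)
  rw [Real.norm_of_nonneg (mul_nonneg (rpow_nonneg (hf0 ω) a) (rpow_nonneg (hg0 ω) b))]
  exact Real.geom_mean_le_arith_mean2_weighted ha hb (hf0 ω) (hg0 ω) hab

theorem integral_rpow_mul_rpow_le (hf : Integrable f μ) (hg : Integrable g μ)
    (hf0 : 0 ≤ f) (hg0 : 0 ≤ g) (ha : 0 ≤ a) (hb : 0 ≤ b) (hab : a + b = 1) :
    ∫ ω, f ω ^ a * g ω ^ b ∂μ ≤ (∫ ω, f ω ∂μ) ^ a * (∫ ω, g ω ∂μ) ^ b := by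
  have hfg0 : 0 ≤ fun ω => f ω ^ a * g ω ^ b := fun ω =>
    mul_nonneg (rpow_nonneg (hf0 ω) a) (rpow_nonneg (hg0 ω) b)
  rw [← ENNReal.ofReal_le_ofReal_iff (mul_nonneg (rpow_nonneg (integral_nonneg hf0) a)
      (rpow_nonneg (integral_nonneg hg0) b)),
    ofReal_integral_eq_lintegral_ofReal (hf.rpow_mul_rpow hg hf0 hg0 ha hb hab) (ae_of_all _ hfg0),
    ENNReal.ofReal_mul (rpow_nonneg (integral_nonneg hf0) a),
    ← ENNReal.ofReal_rpow_of_nonneg (integral_nonneg hf0) ha,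
    ← ENNReal.ofReal_rpow_of_nonneg (integral_nonneg hg0) hb,
    ofReal_integral_eq_lintegral_ofReal hf (ae_of_all _ hf0),
    ofReal_integral_eq_lintegral_ofReal hg (ae_of_all _ hg0)]
  calc ∫⁻ ω, ENNReal.ofReal (f ω ^ a * g ω ^ b) ∂μ
      = ∫⁻ ω, ENNReal.ofReal (f ω) ^ a * ENNReal.ofReal (g ω) ^ b ∂μ := by
        refine lintegral_congr fun ω => ?_
        rw [ENNReal.ofReal_mul (rpow_nonneg (hf0 ω) a),
          ENNReal.ofReal_rpow_of_nonneg (hf0 ω) ha, ENNReal.ofReal_rpow_of_nonneg (hg0 ω) hb]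
    _ ≤ _ := ENNReal.lintegral_mul_norm_pow_le hf.aemeasurable.ennreal_ofReal
        hg.aemeasurable.ennreal_ofReal ha hb hab

end Holder

theorem convexOn_log_integral_exp {Ω E : Type*} [MeasurableSpace Ω] {μ : Measure Ω} [NeZero μ]
    [AddCommGroup E] [Module ℝ E] {C : Set E} {f : E → Ω → ℝ} (hC : Convex ℝ C)
    (hf : ∀ ω, ConvexOn ℝ C (f · ω)) (hint : ∀ x ∈ C, Integrable (fun ω => exp (f x ω)) μ) :
    ConvexOn ℝ C (fun x => log (∫ ω, exp (f x ω) ∂μ)) := by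
  refine ⟨hC, fun x hx y hy a b ha hb hab => ?_⟩
  have hexp_comb : ∀ ω, exp (a * f x ω + b * f y ω) = exp (f x ω) ^ a * exp (f y ω) ^ b := by
    intro ω
    rw [exp_add, ← exp_mul, ← exp_mul, mul_comm (f x ω), mul_comm (f y ω)]
  have hcomb_int : Integrable (fun ω => exp (a * f x ω + b * f y ω)) μ := by
    simp_rw [hexp_comb]
    exact (hint x hx).rpow_mul_rpow (hint y hy) (fun _ => (exp_pos _).le)
      (fun _ => (exp_pos _).le) ha hb hab
  calc log (∫ ω, exp (f (a • x + b • y) ω) ∂μ)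
      ≤ log (∫ ω, exp (a * f x ω + b * f y ω) ∂μ) := by
        have hint_comb := hint _ (hC hx hy ha hb hab)
        exact log_le_log (integral_exp_pos hint_comb) <| integral_mono hint_comb hcomb_int
          fun ω => exp_le_exp.2 ((hf ω).2 hx hy ha hb hab)
    _ ≤ log ((∫ ω, exp (f x ω) ∂μ) ^ a * (∫ ω, exp (f y ω) ∂μ) ^ b) := by
        refine log_le_log (integral_exp_pos hcomb_int) ?_
        simp_rw [hexp_comb]
        exact integral_rpow_mul_rpow_le (hint x hx) (hint y hy) (fun _ => (exp_pos _).le)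
          (fun _ => (exp_pos _).le) ha hb hab
    _ = a * log (∫ ω, exp (f x ω) ∂μ) + b * log (∫ ω, exp (f y ω) ∂μ) := by
        rw [log_mul (rpow_pos_of_pos (integral_exp_pos (hint x hx)) a).ne'
            (rpow_pos_of_pos (integral_exp_pos (hint y hy)) b).ne',
          log_rpow (integral_exp_pos (hint x hx)), log_rpow (integral_exp_pos (hint y hy))]

theorem isProbabilityMeasure_withDensity_ofReal {X : Type*} [MeasurableSpace X] {μ : Measure X}
    {ρ : X → ℝ} (hρ0 : ∀ x, 0 ≤ ρ x) (hρ1 : ∫ x, ρ x ∂μ = 1) :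
    IsProbabilityMeasure (μ.withDensity fun x => ENNReal.ofReal (ρ x)) := by
  constructor
  rw [withDensity_apply _ MeasurableSet.univ, Measure.restrict_univ,
    ← ofReal_integral_eq_lintegral_ofReal (.of_integral_ne_zero (by simp [hρ1]))
      (ae_of_all _ hρ0), hρ1, ENNReal.ofReal_one]

theorem integral_withDensity_ofReal {X : Type*} [MeasurableSpace X] {μ : Measure X}
    {ρ : X → ℝ} (hρ : AEMeasurable ρ μ) (hρ0 : ∀ x, 0 ≤ ρ x) (g : X → ℝ) :
    ∫ x, g x ∂μ.withDensity (fun x => ENNReal.ofReal (ρ x)) = ∫ x, ρ x * g x ∂μ := by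
  rw [integral_withDensity_eq_integral_toReal_smul₀ hρ.ennreal_ofReal
    (ae_of_all _ fun _ => ENNReal.ofReal_lt_top)]
  simp_rw [ENNReal.toReal_ofReal (hρ0 _), smul_eq_mul]

section InnerProductSpace

variable {F : Type*} [NormedAddCommGroup F] [InnerProductSpace ℝ F]

theorem neg_norm_sub_sq_div_eq (x y : F) {s : ℝ} (hs : s ≠ 0) :
    -‖y - x‖ ^ 2 / (2 * s) = -‖x‖ ^ 2 / (2 * s) + s⁻¹ * (inner ℝ y x - ‖y‖ ^ 2 / 2) := by
  rw [norm_sub_sq_real]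
  field_simp
  ring

theorem integral_mul_exp_neg_norm_sub_sq_div [MeasurableSpace F] (μ : Measure F) (ρ : F → ℝ)
    (x : F) {s : ℝ} (hs : s ≠ 0) :
    ∫ y, ρ y * exp (-‖y - x‖ ^ 2 / (2 * s)) ∂μ =
      exp (-‖x‖ ^ 2 / (2 * s)) * ∫ y, ρ y * exp (s⁻¹ * (inner ℝ y x - ‖y‖ ^ 2 / 2)) ∂μ := by
  rw [← integral_const_mul]
  congr 1 with y
  rw [neg_norm_sub_sq_div_eq x y hs, exp_add]
  ring

theorem real_inner_sub_half_norm_sq_le (x y : F) : inner ℝ y x - ‖y‖ ^ 2 / 2 ≤ ‖x‖ ^ 2 / 2 := by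
  nlinarith [real_inner_le_norm y x, two_mul_le_add_sq ‖y‖ ‖x‖]

variable [MeasurableSpace F] [OpensMeasurableSpace F] (ν : Measure F) {t : ℝ}

theorem integrable_exp_mul_inner_sub_half_norm_sq [IsFiniteMeasure ν] (ht : 0 ≤ t) (x : F) :
    Integrable (fun y => exp (t * (inner ℝ y x - ‖y‖ ^ 2 / 2))) ν := by
  refine .of_bound (by fun_prop) (exp (t * (‖x‖ ^ 2 / 2))) (ae_of_all _ fun y => ?_)
  rw [norm_of_nonneg (exp_pos _).le, exp_le_exp]
  exact mul_le_mul_of_nonneg_left (real_inner_sub_half_norm_sq_le x y) ht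

theorem convexOn_log_integral_exp_mul_inner_sub_half_norm_sq [IsFiniteMeasure ν] [NeZero ν]
    (ht : 0 ≤ t) :
    ConvexOn ℝ univ fun x => log (∫ y, exp (t * (inner ℝ y x - ‖y‖ ^ 2 / 2)) ∂ν) :=
  convexOn_log_integral_exp convex_univ
    (fun y => (((innerₛₗ ℝ y).convexOn convex_univ).add_const _).smul ht)
    (fun x _ => integrable_exp_mul_inner_sub_half_norm_sq ν ht x)

end InnerProductSpace

theorem hessian_log_gaussian_convolution_lower_general {n : ℕ}
    (ρ : EuclideanSpace ℝ (Fin n) → ℝ) (hρ0 : ∀ x, 0 ≤ ρ x)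
    (hρ1 : ∫ x, ρ x = 1)
    (s : ℝ) (hs : 0 < s)
    (ρs : EuclideanSpace ℝ (Fin n) → ℝ)
    (hρs : ∀ x, ρs x = (2 * π * s) ^ (-(n : ℝ) / 2) *
      ∫ y, ρ y * Real.exp (-‖y - x‖ ^ 2 / (2 * s))) :
    ConvexOn ℝ univ (fun x : EuclideanSpace ℝ (Fin n) =>
      Real.log (ρs x) + ‖x‖ ^ 2 / (2 * s)) := by
  set ν := volume.withDensity fun y => ENNReal.ofReal (ρ y)
  have : IsProbabilityMeasure ν := isProbabilityMeasure_withDensity_ofReal hρ0 hρ1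
  have hρ_meas : AEMeasurable ρ := (Integrable.of_integral_ne_zero (by simp [hρ1])).aemeasurable
  have hρs_eq : ∀ x, log (ρs x) + ‖x‖ ^ 2 / (2 * s) =
      log (∫ y, exp (s⁻¹ * (inner ℝ y x - ‖y‖ ^ 2 / 2)) ∂ν) +
        log ((2 * π * s) ^ (-(n : ℝ) / 2)) := fun x => by
    have hpos := integral_exp_pos
      (integrable_exp_mul_inner_sub_half_norm_sq ν (inv_nonneg.2 hs.le) x)
    rw [hρs x, integral_mul_exp_neg_norm_sub_sq_div _ _ x hs.ne',
      ← integral_withDensity_ofReal hρ_meas hρ0, log_mul (by positivity) (by positivity),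
      log_mul (exp_pos _).ne' hpos.ne', log_exp]
    ring
  simp_rw [hρs_eq]
  exact (convexOn_log_integral_exp_mul_inner_sub_half_norm_sq ν (inv_nonneg.2 hs.le)).add_const _

/-- Paper Lemma 4.1, inequality (Id), left-hand side: for a probability density `ρ` on `ℝⁿ`
and `s > 0`, the Gaussian convolution `ρ_s = ρ ∗ g_s` satisfies
`∇² log ρ_s ≥ -s⁻¹ Id`, i.e. `x ↦ log ρ_s(x) + |x|²/(2s)` is convex. -/
theorem hessian_log_gaussian_convolution_lower {n : ℕ}
    (ρ : EuclideanSpace ℝ (Fin n) → ℝ) (hρmeas : Measurable ρ) (hρ0 : ∀ x, 0 ≤ ρ x)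
    (hρ1 : ∫ x, ρ x = 1)
    (s : ℝ) (hs : 0 < s)
    (ρs : EuclideanSpace ℝ (Fin n) → ℝ)
    (hρs : ∀ x, ρs x = (2 * π * s) ^ (-(n : ℝ) / 2) *
      ∫ y, ρ y * Real.exp (-‖y - x‖ ^ 2 / (2 * s))) :
    ConvexOn ℝ univ (fun x : EuclideanSpace ℝ (Fin n) =>
      Real.log (ρs x) + ‖x‖ ^ 2 / (2 * s)) :=
  hessian_log_gaussian_convolution_lower_general ρ hρ0 hρ1 s hs ρs hρs
end

section
/- Let h ≥ 0 be a differentiable, non-increasing function on [0, ∞). Then for every nonnegative integer N, ∫₀^{2^N} min(s^{-1/2}, 1) · (-h'(s))^{1/2} ds ≤ h(0)^{1/2} · (N+1)^{1/2}. -/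
/-!
By Cauchy–Schwarz the integral is at most `(∫₀^T w²)^{1/2} (∫₀^T -h')^{1/2}` with `T = 2^N` and
`w s = min(s^{-1/2}, 1)`. The weight gives `∫₀^T w² = 1 + log T = 1 + N log 2 ≤ N + 1`, and by the
fundamental theorem of calculus `∫₀^T -h' = h 0 - h T ≤ h 0` since `h ≥ 0`.
-/

open Real Set MeasureTheory

theorem integral_mul_le_sqrt_integral_sq_mul_sqrt_integral_sq {α : Type*} [MeasurableSpace α]
    {μ : Measure α} {f g : α → ℝ} (hf : MemLp f 2 μ) (hg : MemLp g 2 μ) :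
    ∫ a, f a * g a ∂μ ≤ √(∫ a, f a ^ 2 ∂μ) * √(∫ a, g a ^ 2 ∂μ) := by
  have holder := integral_mul_norm_le_Lp_mul_Lq Real.HolderConjugate.two_two
    (by simpa using hf) (by simpa using hg)
  calc ∫ a, f a * g a ∂μ ≤ ∫ a, ‖f a‖ * ‖g a‖ ∂μ :=
        integral_mono (hf.integrable_mul hg) (hf.norm.integrable_mul hg.norm)
          fun a => by simpa [← abs_mul] using le_abs_self (f a * g a)
    _ ≤ _ := holder
    _ = √(∫ a, f a ^ 2 ∂μ) * √(∫ a, g a ^ 2 ∂μ) := by simp [Real.sqrt_eq_rpow]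

section NonpositiveDerivative

variable {h h' : ℝ → ℝ} {a b : ℝ}

theorem integrableOn_neg_deriv_of_nonpos (hderiv : ∀ s ∈ Icc a b, HasDerivAt h (h' s) s)
    (hnonpos : ∀ s ∈ Ioc a b, h' s ≤ 0) : IntegrableOn (fun s => -h' s) (Ioc a b) :=
  intervalIntegral.integrableOn_deriv_of_nonneg
    (fun s hs => (hderiv s hs).continuousAt.neg.continuousWithinAt)
    (fun s hs => (hderiv s (Ioo_subset_Icc_self hs)).neg)
    (fun s hs => neg_nonneg.2 (hnonpos s (Ioo_subset_Ioc_self hs)))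

theorem setIntegral_sqrt_neg_deriv_sq (hab : a ≤ b)
    (hderiv : ∀ s ∈ Icc a b, HasDerivAt h (h' s) s) (hnonpos : ∀ s ∈ Ioc a b, h' s ≤ 0) :
    ∫ s in Ioc a b, √(-h' s) ^ 2 = h a - h b := by
  have hsq : EqOn (fun s => √(-h' s) ^ 2) (fun s => -h' s) (Ioc a b) :=
    fun s hs => sq_sqrt (neg_nonneg.2 (hnonpos s hs))
  rw [setIntegral_congr_fun measurableSet_Ioc hsq, ← intervalIntegral.integral_of_le hab,
    intervalIntegral.integral_eq_sub_of_hasDerivAt (f := fun s => -h s)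
      (fun s hs => (hderiv s (uIcc_of_le hab ▸ hs)).neg)
      ((intervalIntegrable_iff_integrableOn_Ioc_of_le hab).2
        (integrableOn_neg_deriv_of_nonpos hderiv hnonpos))]
  ring

theorem memLp_sqrt_neg_deriv (hderiv : ∀ s ∈ Icc a b, HasDerivAt h (h' s) s)
    (hnonpos : ∀ s ∈ Ioc a b, h' s ≤ 0) :
    MemLp (fun s => √(-h' s)) 2 (volume.restrict (Ioc a b)) := by
  have hint := integrableOn_neg_deriv_of_nonpos hderiv hnonpos
  refine (memLp_two_iff_integrable_sq
    (continuous_sqrt.comp_aestronglyMeasurable hint.aestronglyMeasurable)).2 ?_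
  exact hint.congr_fun (fun s hs => (sq_sqrt (neg_nonneg.2 (hnonpos s hs))).symm) measurableSet_Ioc

end NonpositiveDerivative

theorem min_rpow_neg_half_one_sq_of_le_one {s : ℝ} (hs₀ : 0 < s) (hs₁ : s ≤ 1) :
    min (s ^ (-(1 : ℝ) / 2)) 1 ^ 2 = 1 := by
  rw [min_eq_right (one_le_rpow_of_pos_of_le_one_of_nonpos hs₀ hs₁ (by norm_num)), one_pow]

theorem min_rpow_neg_half_one_sq_of_one_le {s : ℝ} (hs : 1 ≤ s) :
    min (s ^ (-(1 : ℝ) / 2)) 1 ^ 2 = s⁻¹ := by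
  rw [min_eq_left (rpow_le_one_of_one_le_of_nonpos hs (by norm_num)),
    ← rpow_mul_natCast (zero_le_one.trans hs)]
  norm_num [rpow_neg_one]

theorem setIntegral_min_rpow_neg_half_one_sq {T : ℝ} (hT : 1 ≤ T) :
    ∫ s in Ioc 0 T, min (s ^ (-(1 : ℝ) / 2)) 1 ^ 2 = 1 + log T := by
  have hsmall : EqOn (fun s : ℝ => min (s ^ (-(1 : ℝ) / 2)) 1 ^ 2) (fun _ => 1) (Ioc 0 1) :=
    fun s hs => min_rpow_neg_half_one_sq_of_le_one hs.1 hs.2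
  have hlarge : EqOn (fun s : ℝ => min (s ^ (-(1 : ℝ) / 2)) 1 ^ 2) (fun s => s⁻¹) (Ioc 1 T) :=
    fun s hs => min_rpow_neg_half_one_sq_of_one_le hs.1.le
  have hinv : IntervalIntegrable (fun s : ℝ => s⁻¹) volume 1 T :=
    intervalIntegral.intervalIntegrable_inv
      (fun s hs => (zero_lt_one.trans_le (uIcc_of_le hT ▸ hs).1).ne') continuousOn_id
  rw [← Ioc_union_Ioc_eq_Ioc zero_le_one hT,
    setIntegral_union (Ioc_disjoint_Ioc_of_le le_rfl) measurableSet_Ioc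
      ((integrableOn_const measure_Ioc_lt_top.ne).congr_fun hsmall.symm measurableSet_Ioc)
      (((intervalIntegrable_iff_integrableOn_Ioc_of_le hT).1 hinv).congr_fun hlarge.symm
        measurableSet_Ioc),
    setIntegral_congr_fun measurableSet_Ioc hsmall, setIntegral_congr_fun measurableSet_Ioc hlarge,
    ← intervalIntegral.integral_of_le hT,
    integral_inv (fun h0 => by linarith [(uIcc_of_le hT ▸ h0).1])]
  simp

theorem memLp_min_rpow_neg_half_one (T : ℝ) :
    MemLp (fun s : ℝ => min (s ^ (-(1 : ℝ) / 2)) 1) 2 (volume.restrict (Ioc 0 T)) := by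
  refine MemLp.of_bound ((measurable_id.pow_const _).min measurable_const).aestronglyMeasurable 1
    ((ae_restrict_mem measurableSet_Ioc).mono fun s hs => ?_)
  rw [norm_of_nonneg (le_min (rpow_nonneg hs.1.le _) zero_le_one)]
  exact min_le_right _ _

/-- Paper Lemma 4.2: if `h ≥ 0` is differentiable and non-increasing on `[0, ∞)` then for
every `N ∈ ℕ`, `∫₀^{2^N} min(s^{-1/2}, 1) √(-h'(s)) ds ≤ √(h 0) · √(N+1)`. -/
theorem integral_sqrt_neg_deriv_bound
    (h h' : ℝ → ℝ)
    (hderiv : ∀ s ∈ Ici (0 : ℝ), HasDerivAt h (h' s) s)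
    (hpos : ∀ s ∈ Ici (0 : ℝ), 0 ≤ h s)
    (hmono : ∀ s ∈ Ici (0 : ℝ), h' s ≤ 0)
    (N : ℕ) :
    ∫ s in (0 : ℝ)..(2 ^ N : ℝ),
        min (s ^ (-(1 : ℝ)/2)) 1 * Real.sqrt (-h' s)
      ≤ Real.sqrt (h 0) * Real.sqrt (N + 1) := by
  have hT : (1 : ℝ) ≤ 2 ^ N := one_le_pow₀ one_le_two
  have hderiv' : ∀ s ∈ Icc (0 : ℝ) (2 ^ N), HasDerivAt h (h' s) s := fun s hs => hderiv s hs.1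
  have hnonpos : ∀ s ∈ Ioc (0 : ℝ) (2 ^ N), h' s ≤ 0 := fun s hs => hmono s hs.1.le
  have hweight : ∫ s in Ioc (0 : ℝ) (2 ^ N), min (s ^ (-(1 : ℝ) / 2)) 1 ^ 2 ≤ N + 1 := by
    rw [setIntegral_min_rpow_neg_half_one_sq hT, log_pow]
    nlinarith [log_two_lt_d9, (Nat.cast_nonneg N : (0 : ℝ) ≤ N)]
  have henergy : ∫ s in Ioc (0 : ℝ) (2 ^ N), √(-h' s) ^ 2 ≤ h 0 := by
    rw [setIntegral_sqrt_neg_deriv_sq (by positivity) hderiv' hnonpos]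
    linarith [hpos _ (zero_le_one.trans hT)]
  rw [intervalIntegral.integral_of_le (by positivity)]
  calc _ ≤ √(∫ s in Ioc (0 : ℝ) (2 ^ N), min (s ^ (-(1 : ℝ) / 2)) 1 ^ 2) *
          √(∫ s in Ioc (0 : ℝ) (2 ^ N), √(-h' s) ^ 2) :=
        integral_mul_le_sqrt_integral_sq_mul_sqrt_integral_sq (memLp_min_rpow_neg_half_one _)
          (memLp_sqrt_neg_deriv hderiv' hnonpos)
    _ ≤ √(N + 1) * √(h 0) := by gcongr
    _ = √(h 0) * √(N + 1) := mul_comm _ _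
end

section
/- Let ρ be a probability density on ℝⁿ and for s > 0 set ρ_s = ρ ∗ g_s, where g_s is the centered Gaussian density with covariance s·Id. Then for every x ∈ ℝⁿ and every unit vector θ, the second directional derivative satisfies ∂²_θ log ρ_s(x) = -s⁻¹ + s⁻² Var_{ν_x}(⟨y, θ⟩), where ν_x is the probability measure on ℝⁿ with density proportional to y ↦ ρ(y) exp(-|y - x|²/(2s)). In particular ∂²_θ log ρ_s(x) ≥ -s⁻¹. -/
/-!
Expanding `‖y - (x + r θ)‖²` shows that `r ↦ log ρ_s(x + r θ)` is an affine function minus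
`r² ‖θ‖² / (2s)`, plus the cumulant generating function of `y ↦ ⟪y, θ⟫` under `ν_x` evaluated
at `r / s`. The second derivative of a cumulant generating function at `0` is a variance, which
gives both the formula and the lower bound. The Gaussian factor dominates every `exp (t ⟪y, θ⟫)`,
so this generating function is finite on all of `ℝ` and hence smooth.
-/

open Real Set MeasureTheory

/-- The second derivative of a function along the direction `θ`, at the point `x`. -/
noncomputable def dirDeriv2 {E : Type*} [NormedAddCommGroup E] [NormedSpace ℝ E]
    (g : E → ℝ) (x θ : E) : ℝ :=
  iteratedDeriv 2 (fun r : ℝ => g (x + r • θ)) 0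

open ProbabilityTheory

lemma iteratedDeriv_two_quadratic_add_comp_mul {g : ℝ → ℝ} (hg : ContDiff ℝ 2 g)
    (a b c k r : ℝ) :
    iteratedDeriv 2 (fun r => a + b * r + c * r ^ 2 + g (k * r)) r =
      2 * c + k ^ 2 * iteratedDeriv 2 g (k * r) := by
  have hquad : deriv (fun r => a + b * r + c * r ^ 2) = fun r => b + c * (2 * r) := by
    funext r
    exact ((((hasDerivAt_id r).const_mul b).const_add a).add
      ((hasDerivAt_pow 2 r).const_mul c)).deriv.trans (by simp)
  have hgk : ContDiff ℝ 2 fun r => g (k * r) := hg.comp (by fun_prop)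
  rw [iteratedDeriv_fun_add (f := fun r => a + b * r + c * r ^ 2) (by fun_prop) hgk.contDiffAt,
    iteratedDeriv_comp_const_mul hg, iteratedDeriv_succ, iteratedDeriv_one, hquad]
  simp [mul_comm]

namespace ProbabilityTheory

variable {Ω : Type*} {m : MeasurableSpace Ω} {X : Ω → ℝ} {μ : Measure Ω}

lemma interior_integrableExpSet_eq_univ (h : ∀ t, Integrable (fun ω ↦ exp (t * X ω)) μ) :
    interior (integrableExpSet X μ) = univ := by
  rw [show integrableExpSet X μ = univ from eq_univ_of_forall h, interior_univ]

lemma contDiff_cgf (h : ∀ t, Integrable (fun ω ↦ exp (t * X ω)) μ) {n : WithTop ℕ∞} :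
    ContDiff ℝ n (cgf X μ) :=
  (interior_integrableExpSet_eq_univ h ▸ analyticOnNhd_cgf).contDiff

lemma iteratedDeriv_two_cgf_zero (h : 0 ∈ interior (integrableExpSet X μ)) :
    iteratedDeriv 2 (cgf X μ) 0 =
      (∫ ω, X ω ^ 2 ∂μ) / μ.real univ - ((∫ ω, X ω ∂μ) / μ.real univ) ^ 2 := by
  simp [iteratedDeriv_two_cgf h, deriv_cgf_zero h, mgf_zero']

lemma iteratedDeriv_two_cgf_nonneg {v : ℝ} (h : v ∈ interior (integrableExpSet X μ)) :
    0 ≤ iteratedDeriv 2 (cgf X μ) v :=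
  variance_tilted_mul h ▸ variance_nonneg _ _

end ProbabilityTheory

lemma neg_norm_sub_sq_div_add_mul_inner_le {E : Type*} [NormedAddCommGroup E]
    [InnerProductSpace ℝ E] {s : ℝ} (hs : 0 < s) (x y θ : E) (t : ℝ) :
    -‖y - x‖ ^ 2 / (2 * s) + t * inner ℝ y θ ≤ t * inner ℝ x θ + s * (t * ‖θ‖) ^ 2 / 2 := by
  have hcs : t * inner ℝ (y - x) θ ≤ ‖y - x‖ * (|t| * ‖θ‖) := by
    calc t * inner ℝ (y - x) θ ≤ |t| * |inner ℝ (y - x) θ| := (le_abs_self _).trans (abs_mul _ _).le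
      _ ≤ |t| * (‖y - x‖ * ‖θ‖) := by gcongr; exact abs_real_inner_le_norm _ _
      _ = ‖y - x‖ * (|t| * ‖θ‖) := by ring
  -- AM-GM: `a b ≤ a² / (2 s) + s b² / 2`
  have hamgm : ‖y - x‖ * (|t| * ‖θ‖) ≤ ‖y - x‖ ^ 2 / (2 * s) + s * (|t| * ‖θ‖) ^ 2 / 2 := by
    have := sq_nonneg (‖y - x‖ - s * (|t| * ‖θ‖))
    rw [div_add' _ _ _ (by positivity), le_div_iff₀ (by positivity)]
    nlinarith
  rw [inner_sub_left] at hcs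
  rw [mul_pow, sq_abs, ← mul_pow] at hamgm
  rw [neg_div]
  linarith

lemma norm_sub_add_smul_sq {E : Type*} [NormedAddCommGroup E] [InnerProductSpace ℝ E]
    (x y θ : E) (r : ℝ) :
    ‖y - (x + r • θ)‖ ^ 2 =
      ‖y - x‖ ^ 2 - 2 * r * (inner ℝ y θ - inner ℝ x θ) + r ^ 2 * ‖θ‖ ^ 2 := by
  rw [sub_add_eq_sub_sub, norm_sub_sq_real, real_inner_smul_right, inner_sub_left, norm_smul,
    Real.norm_eq_abs, mul_pow, sq_abs]
  ring

section GaussianWeight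

variable {E : Type*} [NormedAddCommGroup E] [MeasurableSpace E] [BorelSpace E]
  {μ : Measure E} {ρ : E → ℝ} {s : ℝ}

/-- The unnormalised measure `ν_x` of the paper, `ρ(y) exp(-‖y - x‖² / (2s)) dμ(y)`. -/
noncomputable def gaussianWeightedMeasure (μ : Measure E) (ρ : E → ℝ) (s : ℝ) (x : E) :
    Measure E :=
  μ.withDensity fun y => ENNReal.ofReal (ρ y * exp (-‖y - x‖ ^ 2 / (2 * s)))

lemma aemeasurable_gaussianWeightedMeasure_density (hρ : AEMeasurable ρ μ) (x : E) :
    AEMeasurable (fun y => ENNReal.ofReal (ρ y * exp (-‖y - x‖ ^ 2 / (2 * s)))) μ :=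
  (hρ.mul (by fun_prop)).ennreal_ofReal

lemma integral_gaussianWeightedMeasure (hρ : AEMeasurable ρ μ) (hρ0 : 0 ≤ᵐ[μ] ρ) (x : E)
    (g : E → ℝ) :
    ∫ y, g y ∂gaussianWeightedMeasure μ ρ s x =
      ∫ y, g y * (ρ y * exp (-‖y - x‖ ^ 2 / (2 * s))) ∂μ := by
  rw [gaussianWeightedMeasure, integral_withDensity_eq_integral_toReal_smul₀
    (aemeasurable_gaussianWeightedMeasure_density hρ x) (by simp)]
  refine integral_congr_ae ?_
  filter_upwards [hρ0] with y hy
  rw [ENNReal.toReal_ofReal (mul_nonneg hy (exp_pos _).le), smul_eq_mul, mul_comm]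

lemma integrable_gaussianWeightedMeasure_iff (hρ : AEMeasurable ρ μ) (hρ0 : 0 ≤ᵐ[μ] ρ) (x : E)
    {g : E → ℝ} :
    Integrable g (gaussianWeightedMeasure μ ρ s x) ↔
      Integrable (fun y => g y * (ρ y * exp (-‖y - x‖ ^ 2 / (2 * s)))) μ := by
  rw [gaussianWeightedMeasure, integrable_withDensity_iff_integrable_smul₀'
    (aemeasurable_gaussianWeightedMeasure_density hρ x) (by simp)]
  refine integrable_congr ?_
  filter_upwards [hρ0] with y hy
  rw [ENNReal.toReal_ofReal (mul_nonneg hy (exp_pos _).le), smul_eq_mul, mul_comm]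

lemma gaussianWeightedMeasure_ne_zero [NeZero μ] (hρ : AEMeasurable ρ μ) (hρpos : ∀ y, 0 < ρ y)
    (x : E) : gaussianWeightedMeasure μ ρ s x ≠ 0 := by
  rw [gaussianWeightedMeasure, Ne, withDensity_eq_zero_iff
    (aemeasurable_gaussianWeightedMeasure_density hρ x)]
  intro h
  obtain ⟨y, hy⟩ := h.exists
  simp only [Pi.zero_apply, ENNReal.ofReal_eq_zero] at hy
  exact hy.not_gt (mul_pos (hρpos y) (exp_pos _))

variable [InnerProductSpace ℝ E]

lemma integrable_exp_mul_inner_gaussianWeightedMeasure (hρ : Integrable ρ μ) (hρ0 : 0 ≤ᵐ[μ] ρ)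
    (hs : 0 < s) (x θ : E) (t : ℝ) :
    Integrable (fun y => exp (t * inner ℝ y θ)) (gaussianWeightedMeasure μ ρ s x) := by
  rw [integrable_gaussianWeightedMeasure_iff hρ.aemeasurable hρ0]
  refine (hρ.mul_const (exp (t * inner ℝ x θ + s * (t * ‖θ‖) ^ 2 / 2))).mono'
    ((by fun_prop : Continuous fun y => exp (t * inner ℝ y θ)).aestronglyMeasurable.mul
      (hρ.aestronglyMeasurable.mul (by fun_prop : Continuous fun y =>
        exp (-‖y - x‖ ^ 2 / (2 * s))).aestronglyMeasurable)) ?_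
  filter_upwards [hρ0] with y hy
  rw [Real.norm_eq_abs, abs_of_nonneg (mul_nonneg (exp_pos _).le (mul_nonneg hy (exp_pos _).le)),
    mul_left_comm, ← exp_add, add_comm]
  exact mul_le_mul_of_nonneg_left
    (exp_le_exp.2 (neg_norm_sub_sq_div_add_mul_inner_le hs x y θ t)) hy

lemma integral_mul_exp_norm_sub_add_smul (hρ : AEMeasurable ρ μ) (hρ0 : 0 ≤ᵐ[μ] ρ) (x θ : E)
    (r : ℝ) :
    ∫ y, ρ y * exp (-‖y - (x + r • θ)‖ ^ 2 / (2 * s)) ∂μ =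
      exp (-(inner ℝ x θ / s) * r - ‖θ‖ ^ 2 / (2 * s) * r ^ 2) *
        mgf (fun y => inner ℝ y θ) (gaussianWeightedMeasure μ ρ s x) (s⁻¹ * r) := by
  rw [mgf, integral_gaussianWeightedMeasure hρ hρ0, ← integral_const_mul]
  refine integral_congr_ae (Filter.Eventually.of_forall fun y => ?_)
  dsimp only
  rw [mul_left_comm, ← mul_assoc (exp _), ← exp_add, mul_left_comm, ← exp_add, norm_sub_add_smul_sq]
  congr 2
  ring

lemma log_mul_integral_mul_exp_norm_sub_add_smul [NeZero μ] (hρ : Integrable ρ μ)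
    (hρpos : ∀ y, 0 < ρ y) (hs : 0 < s) {c : ℝ} (hc : 0 < c) (x θ : E) (r : ℝ) :
    log (c * ∫ y, ρ y * exp (-‖y - (x + r • θ)‖ ^ 2 / (2 * s)) ∂μ) =
      log c + -(inner ℝ x θ / s) * r + -(‖θ‖ ^ 2 / (2 * s)) * r ^ 2 +
        cgf (fun y => inner ℝ y θ) (gaussianWeightedMeasure μ ρ s x) (s⁻¹ * r) := by
  have hρ0 : 0 ≤ᵐ[μ] ρ := Filter.Eventually.of_forall fun y => (hρpos y).le
  have hmgf := mgf_pos' (gaussianWeightedMeasure_ne_zero hρ.aemeasurable hρpos x)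
    (integrable_exp_mul_inner_gaussianWeightedMeasure hρ hρ0 hs x θ (s⁻¹ * r))
  rw [integral_mul_exp_norm_sub_add_smul hρ.aemeasurable hρ0, log_mul hc.ne' (by positivity),
    log_mul (exp_pos _).ne' hmgf.ne', log_exp, cgf]
  ring

lemma dirDeriv2_log_mul_integral_mul_exp_norm_sub [NeZero μ] (hρ : Integrable ρ μ)
    (hρpos : ∀ y, 0 < ρ y) (hs : 0 < s) {c : ℝ} (hc : 0 < c) (x θ : E) :
    dirDeriv2 (fun z => log (c * ∫ y, ρ y * exp (-‖y - z‖ ^ 2 / (2 * s)) ∂μ)) x θ =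
      -(‖θ‖ ^ 2 / s) + s⁻¹ ^ 2 *
        iteratedDeriv 2 (cgf (fun y => inner ℝ y θ) (gaussianWeightedMeasure μ ρ s x)) 0 := by
  have hX := integrable_exp_mul_inner_gaussianWeightedMeasure hρ
    (Filter.Eventually.of_forall fun y => (hρpos y).le) hs x θ
  simp_rw [dirDeriv2, log_mul_integral_mul_exp_norm_sub_add_smul hρ hρpos hs hc x θ]
  rw [iteratedDeriv_two_quadratic_add_comp_mul (contDiff_cgf hX), mul_zero]
  field_simp

end GaussianWeight

theorem second_dir_deriv_log_gaussian_convolution_general {n : ℕ}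
    (ρ : EuclideanSpace ℝ (Fin n) → ℝ) (hρpos : ∀ x, 0 < ρ x)
    (hρ1 : ∫ x, ρ x = 1)
    (s : ℝ) (hs : 0 < s)
    (ρs : EuclideanSpace ℝ (Fin n) → ℝ)
    (hρs : ∀ x, ρs x = (2 * π * s) ^ (-(n : ℝ) / 2) *
      ∫ y, ρ y * Real.exp (-‖y - x‖ ^ 2 / (2 * s)))
    (x θ : EuclideanSpace ℝ (Fin n)) (hθ : ‖θ‖ = 1) :
    (dirDeriv2 (fun z => Real.log (ρs z)) x θ =
        -s⁻¹ + s⁻¹ ^ 2 *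
          ((∫ y, (inner ℝ y θ : ℝ) ^ 2 * (ρ y * Real.exp (-‖y - x‖ ^ 2 / (2 * s)))) /
              (∫ y, ρ y * Real.exp (-‖y - x‖ ^ 2 / (2 * s)))
            - ((∫ y, (inner ℝ y θ : ℝ) * (ρ y * Real.exp (-‖y - x‖ ^ 2 / (2 * s)))) /
                (∫ y, ρ y * Real.exp (-‖y - x‖ ^ 2 / (2 * s)))) ^ 2)) ∧
      -s⁻¹ ≤ dirDeriv2 (fun z => Real.log (ρs z)) x θ := by
  have hρ : Integrable ρ := .of_integral_ne_zero (by simp [hρ1])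
  have hρ0 : 0 ≤ᵐ[volume] ρ := Filter.Eventually.of_forall fun y => (hρpos y).le
  set ν := gaussianWeightedMeasure volume ρ s x
  have h0 : (0 : ℝ) ∈ interior (integrableExpSet (fun y => inner ℝ y θ) ν) := by
    rw [interior_integrableExpSet_eq_univ
      (integrable_exp_mul_inner_gaussianWeightedMeasure hρ hρ0 hs x θ)]
    exact mem_univ 0
  have hderiv : dirDeriv2 (fun z => log (ρs z)) x θ =
      -s⁻¹ + s⁻¹ ^ 2 * iteratedDeriv 2 (cgf (fun y => inner ℝ y θ) ν) 0 := by
    rw [funext hρs, dirDeriv2_log_mul_integral_mul_exp_norm_sub hρ hρpos hs (by positivity),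
      hθ, one_pow, one_div]
  refine ⟨?_, ?_⟩
  · have hmass : ν.real univ = ∫ y, ρ y * exp (-‖y - x‖ ^ 2 / (2 * s)) := by
      simpa using integral_gaussianWeightedMeasure hρ.aemeasurable hρ0 x (s := s) fun _ => 1
    rw [hderiv, iteratedDeriv_two_cgf_zero h0, hmass,
      integral_gaussianWeightedMeasure hρ.aemeasurable hρ0,
      integral_gaussianWeightedMeasure hρ.aemeasurable hρ0]
  · rw [hderiv]
    exact le_add_of_nonneg_right (mul_nonneg (sq_nonneg _) (iteratedDeriv_two_cgf_nonneg h0))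

/-- Paper Lemma 4.1, formula (par): for a (log-concave) probability density `ρ` on `ℝⁿ` and
`s > 0`, the Gaussian convolution `ρ_s = ρ ∗ g_s` satisfies, for every `x` and every unit
vector `θ`, `∂²_θ log ρ_s(x) = -s⁻¹ + s⁻² Var_{ν_x}(⟨y, θ⟩)` where `ν_x` has density
proportional to `y ↦ ρ(y) exp(-|y-x|²/(2s))`; in particular `∂²_θ log ρ_s(x) ≥ -s⁻¹`. -/
theorem second_dir_deriv_log_gaussian_convolution {n : ℕ}
    (ρ : EuclideanSpace ℝ (Fin n) → ℝ) (hρmeas : Measurable ρ) (hρpos : ∀ x, 0 < ρ x)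
    (hρ1 : ∫ x, ρ x = 1)
    -- log-concavity, justifying differentiation under the integral sign
    (hlc : ∀ x y : EuclideanSpace ℝ (Fin n), ∀ a b : ℝ, 0 ≤ a → 0 ≤ b → a + b = 1 →
      (ρ x) ^ a * (ρ y) ^ b ≤ ρ (a • x + b • y))
    (s : ℝ) (hs : 0 < s)
    (ρs : EuclideanSpace ℝ (Fin n) → ℝ)
    (hρs : ∀ x, ρs x = (2 * π * s) ^ (-(n : ℝ) / 2) *
      ∫ y, ρ y * Real.exp (-‖y - x‖ ^ 2 / (2 * s)))
    (x θ : EuclideanSpace ℝ (Fin n)) (hθ : ‖θ‖ = 1) :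
    (dirDeriv2 (fun z => Real.log (ρs z)) x θ =
        -s⁻¹ + s⁻¹ ^ 2 *
          ((∫ y, (inner ℝ y θ : ℝ) ^ 2 * (ρ y * Real.exp (-‖y - x‖ ^ 2 / (2 * s)))) /
              (∫ y, ρ y * Real.exp (-‖y - x‖ ^ 2 / (2 * s)))
            - ((∫ y, (inner ℝ y θ : ℝ) * (ρ y * Real.exp (-‖y - x‖ ^ 2 / (2 * s)))) /
                (∫ y, ρ y * Real.exp (-‖y - x‖ ^ 2 / (2 * s)))) ^ 2)) ∧
      -s⁻¹ ≤ dirDeriv2 (fun z => Real.log (ρs z)) x θ :=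
  second_dir_deriv_log_gaussian_convolution_general ρ hρpos hρ1 s hs ρs hρs x θ hθ
end

section
/- Define sequences t_k and s_k by: t₁ ∈ (0, e^{-1000}], t_{k+1} = |log t_k|^{-16}, s₁ = 7/3, and s_{k+1} = s_k + |log t_{k+1}|^{-1/2}. Let k₀ = sup{k ≥ 1 : t_k ≤ e^{-1000}}. Then for all 1 ≤ k ≤ k₀: (i) t_k ≤ (t_{k+1})², and (ii) 7/3 ≤ s_k ≤ 8/3. -/
open Real Set

lemma log1000_lt7 : Real.log 1000 < 7 := by
  have he : (2.7:ℝ) < Real.exp 1 := by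
    have := Real.exp_one_gt_d9; linarith
  have h7 : (1000:ℝ) < Real.exp 7 := by
    calc (1000:ℝ) < 2.7 ^ (7:ℕ) := by norm_num
      _ ≤ (Real.exp 1) ^ (7:ℕ) := pow_le_pow_left₀ (by norm_num) he.le 7
      _ = Real.exp 7 := by rw [Real.exp_one_pow]; norm_num
  calc Real.log 1000 < Real.log (Real.exp 7) := Real.log_lt_log (by norm_num) h7
    _ = 7 := Real.log_exp 7

lemma key64' (r : ℝ) (hr : 1000 ≤ r) : 64 * Real.log r ≤ r := by
  have h1 : Real.log r = Real.log 1000 + Real.log (r / 1000) := by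
    rw [← Real.log_mul (by norm_num) (by positivity)]
    ring_nf
  have h2 : Real.log (r / 1000) ≤ r / 1000 - 1 :=
    Real.log_le_sub_one_of_pos (by linarith)
  nlinarith [log1000_lt7]

lemma key850 (r : ℝ) (hr : 1000 ≤ r) : 16 * Real.log r ≤ r - 850 := by
  have h1 : Real.log r = Real.log 1000 + Real.log (r / 1000) := by
    rw [← Real.log_mul (by norm_num) (by positivity)]
    ring_nf
  have h2 : Real.log (r / 1000) ≤ r / 1000 - 1 :=
    Real.log_le_sub_one_of_pos (by linarith)
  nlinarith [log1000_lt7]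

/-- The recursive sequences `t_k`, `s_k` from the proof of paper Lemma 2.1:
`t_{k+1} = |log t_k|^{-16}`, `s₁ = 7/3`, `s_{k+1} = s_k + |log t_{k+1}|^{-1/2}`, with
`t₁ ∈ (0, e^{-1000}]`.  For all `1 ≤ k ≤ k₀ = sup{k ≥ 1 : t_k ≤ e^{-1000}}` one has
`t_k ≤ t_{k+1}²` and `7/3 ≤ s_k ≤ 8/3`. -/
theorem sequence_estimates (t s : ℕ → ℝ)
    (ht1 : t 1 ∈ Ioc (0 : ℝ) (Real.exp (-1000)))
    (htrec : ∀ k : ℕ, 1 ≤ k → t (k + 1) = |Real.log (t k)| ^ (-(16 : ℝ)))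
    (hs1 : s 1 = 7 / 3)
    (hsrec : ∀ k : ℕ, 1 ≤ k → s (k + 1) = s k + |Real.log (t (k + 1))| ^ (-(1 : ℝ) / 2)) :
    ∀ k : ℕ, 1 ≤ k → k ≤ sSup {k : ℕ | 1 ≤ k ∧ t k ≤ Real.exp (-1000)} →
      t k ≤ (t (k + 1)) ^ 2 ∧ 7 / 3 ≤ s k ∧ s k ≤ 8 / 3 := by
  obtain ⟨ht1pos, ht1le⟩ := ht1
  set S : Set ℕ := {k : ℕ | 1 ≤ k ∧ t k ≤ Real.exp (-1000)} with hSdef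
  have hS1 : 1 ∈ S := ⟨le_refl 1, ht1le⟩
  -- all terms lie in (0, e^{-3}]
  have h03 : ∀ k, 1 ≤ k → 0 < t k ∧ t k ≤ Real.exp (-3) := by
    intro k hk
    induction k, hk using Nat.le_induction with
    | base => exact ⟨ht1pos, ht1le.trans (Real.exp_le_exp.mpr (by norm_num))⟩
    | succ k hk ih =>
      obtain ⟨hpos, hle⟩ := ih
      have hlog : Real.log (t k) ≤ -3 := by
        calc Real.log (t k) ≤ Real.log (Real.exp (-3)) := Real.log_le_log hpos hle
          _ = -3 := Real.log_exp _
      have habs : (3:ℝ) ≤ |Real.log (t k)| := by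
        rw [abs_of_nonpos (by linarith)]; linarith
      rw [htrec k hk]
      refine ⟨Real.rpow_pos_of_pos (by linarith) _, ?_⟩
      calc |Real.log (t k)| ^ (-(16:ℝ)) ≤ (3:ℝ) ^ (-(16:ℝ)) :=
            Real.rpow_le_rpow_of_nonpos (by norm_num) habs (by norm_num)
        _ ≤ Real.exp (-3) := by
            rw [Real.rpow_neg (by norm_num), Real.exp_neg,
              show ((3:ℝ) ^ (16:ℝ)) = (3:ℝ) ^ (16:ℕ) from Real.rpow_natCast 3 16]
            apply inv_anti₀ (Real.exp_pos 3)
            calc Real.exp 3 = (Real.exp 1) ^ (3:ℕ) := by rw [Real.exp_one_pow]; norm_num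
              _ ≤ (2.72:ℝ) ^ (3:ℕ) := by
                  have := Real.exp_one_lt_d9
                  exact pow_le_pow_left₀ (Real.exp_pos 1).le (by linarith) 3
              _ ≤ (3:ℝ) ^ (16:ℕ) := by norm_num
  -- abs-log basics
  have habs3 : ∀ k, 1 ≤ k → (3:ℝ) ≤ |Real.log (t k)| ∧ |Real.log (t k)| = -Real.log (t k) := by
    intro k hk
    obtain ⟨hpos, hle⟩ := h03 k hk
    have hlog : Real.log (t k) ≤ -3 := by
      calc Real.log (t k) ≤ Real.log (Real.exp (-3)) := Real.log_le_log hpos hle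
        _ = -3 := Real.log_exp _
    refine ⟨?_, abs_of_nonpos (by linarith)⟩
    rw [abs_of_nonpos (by linarith)]; linarith
  -- recursion for |log|
  have hLrec : ∀ k, 1 ≤ k →
      |Real.log (t (k+1))| = 16 * Real.log |Real.log (t k)| := by
    intro k hk
    obtain ⟨h3, _⟩ := habs3 k hk
    have hpos : (0:ℝ) < |Real.log (t k)| := by linarith
    have hlogL : 0 ≤ Real.log |Real.log (t k)| := Real.log_nonneg (by linarith)
    rw [htrec k hk, Real.log_rpow hpos, abs_of_nonpos (by nlinarith)]
    ring
  -- L ≥ 1000 when t ≤ e^{-1000}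
  have hL1000 : ∀ k, 1 ≤ k → t k ≤ Real.exp (-1000) → (1000:ℝ) ≤ |Real.log (t k)| := by
    intro k hk h
    obtain ⟨hpos, _⟩ := h03 k hk
    obtain ⟨_, habs⟩ := habs3 k hk
    have hlog : Real.log (t k) ≤ -1000 := by
      calc Real.log (t k) ≤ Real.log (Real.exp (-1000)) := Real.log_le_log hpos h
        _ = -1000 := Real.log_exp _
    rw [habs]; linarith
  -- downward closedness
  have hdown : ∀ k, 1 ≤ k → t (k+1) ≤ Real.exp (-1000) → t k ≤ Real.exp (-1000) := by
    intro k hk h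
    by_contra hcon
    push_neg at hcon
    obtain ⟨h3, habs⟩ := habs3 k hk
    have hpos : (0:ℝ) < |Real.log (t k)| := by linarith
    have hL : |Real.log (t k)| < 1000 := by
      have hlt : -1000 < Real.log (t k) := by
        calc (-1000:ℝ) = Real.log (Real.exp (-1000)) := (Real.log_exp _).symm
          _ < Real.log (t k) := Real.log_lt_log (Real.exp_pos _) hcon
      rw [habs]; linarith
    have hbig : Real.exp (-1000) < t (k+1) := by
      rw [htrec k hk, Real.rpow_def_of_pos hpos]
      apply Real.exp_lt_exp.mpr
      have hlogL : Real.log |Real.log (t k)| < 7 := by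
        calc Real.log |Real.log (t k)| < Real.log 1000 := Real.log_lt_log hpos hL
          _ < 7 := log1000_lt7
      nlinarith [Real.log_nonneg (show (1:ℝ) ≤ |Real.log (t k)| by linarith)]
    linarith
  -- chain property: everything below a small index is small
  have hchain : ∀ m, 1 ≤ m → t m ≤ Real.exp (-1000) →
      ∀ j, 1 ≤ j → j ≤ m → t j ≤ Real.exp (-1000) := by
    intro m hm
    induction m, hm using Nat.le_induction with
    | base =>
      intro h j hj hjm
      have : j = 1 := le_antisymm hjm hj
      rwa [this]
    | succ m hm ih =>
      intro h j hj hjm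
      rcases Nat.lt_or_ge j (m+1) with hlt | hge
      · exact ih (hdown m hm h) j hj (by omega)
      · have : j = m + 1 := by omega
        rwa [this]
  -- decrement of L along the small region
  have hdec : ∀ k, 1 ≤ k → t k ≤ Real.exp (-1000) →
      |Real.log (t (k+1))| ≤ |Real.log (t k)| - 850 := by
    intro k hk h
    rw [hLrec k hk]
    exact key850 _ (hL1000 k hk h)
  -- boundedness of S
  have hbdd : BddAbove S := by
    have hsum : ∀ k, 1 ≤ k → (∀ j, 1 ≤ j → j ≤ k → t j ≤ Real.exp (-1000)) →
        |Real.log (t k)| + 850 * ((k:ℝ) - 1) ≤ |Real.log (t 1)| := by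
      intro k hk
      induction k, hk using Nat.le_induction with
      | base => intro _; norm_num
      | succ k hk ih =>
        intro hall
        have h1 := ih (fun j hj hjk => hall j hj (by omega))
        have h2 := hdec k hk (hall k hk (by omega))
        push_cast
        push_cast at h1
        linarith
    refine ⟨⌈|Real.log (t 1)|⌉₊ + 1, fun k hkS => ?_⟩
    obtain ⟨hk1, hkle⟩ := hkS
    have hall := hchain k hk1 hkle
    have h1 := hsum k hk1 hall
    have h2 := hL1000 k hk1 hkle
    have h3 : (k:ℝ) ≤ |Real.log (t 1)| + 1 := by nlinarith
    have h4 : (k:ℝ) ≤ (⌈|Real.log (t 1)|⌉₊:ℝ) + 1 := h3.trans (by linarith [Nat.le_ceil |Real.log (t 1)|])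
    exact_mod_cast h4
  have hk0 : sSup S ∈ S := Nat.sSup_mem ⟨1, hS1⟩ hbdd
  have hsmall : ∀ j, 1 ≤ j → j ≤ sSup S → t j ≤ Real.exp (-1000) :=
    fun j hj hjk => hchain (sSup S) hk0.1 hk0.2 j hj hjk
  -- lower bound for s
  have hslow : ∀ k, 1 ≤ k → 7/3 ≤ s k := by
    intro k hk
    induction k, hk using Nat.le_induction with
    | base => rw [hs1]
    | succ k hk ih =>
      rw [hsrec k hk]
      have : (0:ℝ) ≤ |Real.log (t (k+1))| ^ (-(1:ℝ)/2) := Real.rpow_nonneg (abs_nonneg _) _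
      linarith
  -- upper bound for s with room
  have hsup : ∀ k, 1 ≤ k → k ≤ sSup S →
      s k ≤ 7/3 + 2 * |Real.log (t k)| ^ (-(1:ℝ)/2) := by
    intro k hk
    induction k, hk using Nat.le_induction with
    | base =>
      intro _
      rw [hs1]
      have : (0:ℝ) ≤ |Real.log (t 1)| ^ (-(1:ℝ)/2) := Real.rpow_nonneg (abs_nonneg _) _
      linarith
    | succ k hk ih =>
      intro hk1
      have hkk0 : k ≤ sSup S := le_trans (Nat.le_succ k) hk1
      have h1 := ih hkk0
      have hLk := hL1000 k hk (hsmall k hk hkk0)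
      have hLkpos : (0:ℝ) < |Real.log (t k)| := by linarith
      have hlogLpos : 0 < Real.log |Real.log (t k)| := Real.log_pos (by linarith)
      have hLk1pos : (0:ℝ) < |Real.log (t (k+1))| := by
        rw [hLrec k hk]; linarith
      have h4 : 4 * |Real.log (t (k+1))| ≤ |Real.log (t k)| := by
        rw [hLrec k hk]
        have := key64' _ hLk
        linarith
      have hA : |Real.log (t k)| ^ (-(1:ℝ)/2) ≤
          (1/2) * |Real.log (t (k+1))| ^ (-(1:ℝ)/2) := by
        have ha : |Real.log (t k)| ^ (-(1:ℝ)/2) ≤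
            (4 * |Real.log (t (k+1))|) ^ (-(1:ℝ)/2) :=
          Real.rpow_le_rpow_of_nonpos (by linarith) h4 (by norm_num)
        have hb : (4 * |Real.log (t (k+1))|) ^ (-(1:ℝ)/2)
            = (4:ℝ) ^ (-(1:ℝ)/2) * |Real.log (t (k+1))| ^ (-(1:ℝ)/2) :=
          Real.mul_rpow (by norm_num) (abs_nonneg _)
        have hc : (4:ℝ) ^ (-(1:ℝ)/2) = 1/2 := by
          rw [show (4:ℝ) = (2:ℝ) ^ (2:ℕ) by norm_num, ← Real.rpow_natCast (2:ℝ) 2,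
            ← Real.rpow_mul (by norm_num : (0:ℝ) ≤ 2)]
          norm_num
        rw [hb, hc] at ha
        exact ha
      rw [hsrec k hk]
      linarith
  -- final numeric bound for the s upper bound
  have hnum : ∀ k, 1 ≤ k → k ≤ sSup S → s k ≤ 8/3 := by
    intro k hk hkk0
    have h1 := hsup k hk hkk0
    have hLk := hL1000 k hk (hsmall k hk hkk0)
    have h2 : |Real.log (t k)| ^ (-(1:ℝ)/2) ≤ (36:ℝ) ^ (-(1:ℝ)/2) :=
      Real.rpow_le_rpow_of_nonpos (by norm_num) (by linarith) (by norm_num)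
    have h3 : (36:ℝ) ^ (-(1:ℝ)/2) = 1/6 := by
      rw [show (36:ℝ) = (6:ℝ) ^ (2:ℕ) by norm_num, ← Real.rpow_natCast (6:ℝ) 2,
        ← Real.rpow_mul (by norm_num : (0:ℝ) ≤ 6)]
      norm_num
    rw [h3] at h2
    linarith
  -- main statement
  intro k hk hkk0
  refine ⟨?_, hslow k hk, hnum k hk hkk0⟩
  -- part (i)
  obtain ⟨hpos, _⟩ := h03 k hk
  obtain ⟨h3, habs⟩ := habs3 k hk
  have hLk := hL1000 k hk (hsmall k hk hkk0)
  have hLkpos : (0:ℝ) < |Real.log (t k)| := by linarith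
  have hsq : (t (k+1)) ^ 2 = |Real.log (t k)| ^ (-(32:ℝ)) := by
    rw [htrec k hk, ← Real.rpow_natCast (|Real.log (t k)| ^ (-(16:ℝ))) 2,
      ← Real.rpow_mul hLkpos.le]
    norm_num
  rw [hsq, Real.rpow_def_of_pos hLkpos]
  calc t k = Real.exp (Real.log (t k)) := (Real.exp_log hpos).symm
    _ ≤ Real.exp (Real.log |Real.log (t k)| * (-32)) := by
        apply Real.exp_le_exp.mpr
        have h64 := key64' _ hLk
        have hlogL : 0 ≤ Real.log |Real.log (t k)| := Real.log_nonneg (by linarith)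
        have : Real.log (t k) = -|Real.log (t k)| := by rw [habs]; ring
        nlinarith
    _ = Real.exp (Real.log |Real.log (t k)| * (-32)) := rfl
end
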